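/- Let φ be a gyrogroup homomorphism defined on a gyrogroup G. Then ker φ = {a ∈ G : φ(a) = e} is a strong subgyrogroup of G (i.e., gyr[a,b](ker φ) = ker φ for all a, b ∈ G), and consequently the coset space G/ker φ = {a ⊕ ker φ : a ∈ G} is a minimally invariant set of the geometry (G, Γ_m). -/
import Mathlib


/-- A gyrogroup: a set with a binary operation `op`, a left identity `e`, left inverses
`inv`, and gyroautomorphisms `gyr a b` (bijective and operation-preserving) satisfying the
left gyroassociative law and the left loop property. -/
class Gyrogroup (G : Type*) where
  /-- the gyrogroup operation `⊕` -/
  op : G → G → G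
  /-- the identity element -/
  e : G
  /-- the inverse `⊖a` -/
  inv : G → G
  /-- (G1) `e ⊕ a = a` -/
  op_e : ∀ a : G, op e a = a
  /-- (G2) `⊖a ⊕ a = e` -/
  op_inv : ∀ a : G, op (inv a) a = e
  /-- the gyroautomorphism `gyr[a, b]` -/
  gyr : G → G → G → G
  /-- (G3) `gyr[a, b]` is bijective -/
  gyr_bijective : ∀ a b : G, Function.Bijective (gyr a b)
  /-- (G3) `gyr[a, b]` preserves the operation -/
  gyr_op : ∀ a b x y : G, gyr a b (op x y) = op (gyr a b x) (gyr a b y)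
  /-- (G3) the left gyroassociative law -/
  gyrassoc : ∀ a b c : G, op a (op b c) = op (op a b) (gyr a b c)
  /-- (G4) the left loop property -/
  loop : ∀ a b : G, gyr (op a b) b = gyr a b

namespace Gyrogroup

variable {G : Type*} [Gyrogroup G]

theorem key (x z : G) : op (inv x) (op x z) = gyr (inv x) x z := by
  rw [gyrassoc, op_inv, op_e]

theorem L_injective (x : G) : Function.Injective (op x) := by
  intro z₁ z₂ h
  have h1 : gyr (inv x) x z₁ = gyr (inv x) x z₂ := by
    rw [← key, ← key, h]
  exact (gyr_bijective (inv x) x).1 h1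

theorem L_surjective (x : G) : Function.Surjective (op x) := by
  intro w
  obtain ⟨z, hz⟩ := (gyr_bijective (inv x) x).2 (op (inv x) w)
  exact ⟨z, L_injective (inv x) (by rw [key, hz])⟩

theorem L_bijective (x : G) : Function.Bijective (op x) :=
  ⟨L_injective x, L_surjective x⟩

/-- The left gyrotranslation `L_a : x ↦ a ⊕ x` as a permutation of `G`. -/
noncomputable def Lperm (a : G) : Equiv.Perm G := Equiv.ofBijective (op a) (L_bijective a)

/-- The gyroautomorphism `gyr[a, b]` as a permutation of `G`. -/
noncomputable def gyrPerm (a b : G) : Equiv.Perm G := Equiv.ofBijective (gyr a b) (gyr_bijective a b)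

/-- `GYR(G)`: the subgroup of `Sym(G)` generated by all gyroautomorphisms. -/
def GYR (G : Type*) [Gyrogroup G] : Subgroup (Equiv.Perm G) :=
  Subgroup.closure {π : Equiv.Perm G | ∃ a b : G, π = gyrPerm a b}

/-- `Γₘ = {L_a ∘ γ : a ∈ G, γ ∈ GYR(G)}`, a subgroup of `Sym(G)`. -/
def Γm (G : Type*) [Gyrogroup G] : Set (Equiv.Perm G) :=
  {T : Equiv.Perm G | ∃ a : G, ∃ γ ∈ GYR G, T = Lperm a * γ}

end Gyrogroup

/-- A set of figures is invariant if it is closed under all transformations of the geometry. -/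
def IsInvariantSet {S : Type*} (𝒯 : Set (Equiv.Perm S)) (𝒞 : Set (Set S)) : Prop :=
  ∀ F ∈ 𝒞, ∀ t ∈ 𝒯, ⇑t '' F ∈ 𝒞

/-- An invariant set is minimally invariant if it contains no nonempty proper invariant
subset. -/
def IsMinimallyInvariantSet {S : Type*} (𝒯 : Set (Equiv.Perm S)) (𝒞 : Set (Set S)) : Prop :=
  IsInvariantSet 𝒯 𝒞 ∧ ∀ 𝒟 ⊆ 𝒞, IsInvariantSet 𝒯 𝒟 → 𝒟.Nonempty → 𝒟 = 𝒞

/-- `H` is a subgyrogroup of the gyrogroup `G`: it is nonempty, closed under the gyrogroup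
operation and inverses (hence a gyrogroup under the operation of `G`), and
`gyr[a,b](H) = H` for all `a, b ∈ H`. -/
def IsSubgyrogroup {G : Type*} [Gyrogroup G] (H : Set G) : Prop :=
  H.Nonempty ∧ (∀ a ∈ H, ∀ b ∈ H, Gyrogroup.op a b ∈ H) ∧
    (∀ a ∈ H, Gyrogroup.inv a ∈ H) ∧
    ∀ a ∈ H, ∀ b ∈ H, Gyrogroup.gyr a b '' H = H

namespace GyroAux

open Gyrogroup

variable {G : Type*} [Gyrogroup G]

theorem gyr_e_left (a c : G) : gyr e a c = c := by
  have h := gyrassoc e a c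
  rw [op_e, op_e] at h
  exact L_injective a h.symm

theorem gyr_inv_self (a c : G) : gyr (inv a) a c = c := by
  have h := loop (inv a) a
  rw [op_inv] at h
  rw [← h, gyr_e_left]

theorem leftCancel (a x : G) : op (inv a) (op a x) = x := by
  rw [key, gyr_inv_self]

theorem op_e_right (a : G) : op a e = a := by
  apply L_injective (inv a)
  rw [leftCancel, op_inv]

theorem inv_inv (a : G) : inv (inv a) = a := by
  have h := leftCancel (inv a) a
  rwa [op_inv, op_e_right] at h

theorem op_inv_right (a : G) : op a (inv a) = e := by
  calc op a (inv a) = op (inv (inv a)) (inv a) := by rw [inv_inv]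
    _ = e := op_inv _

theorem left_inv_unique {a b : G} (h : op b a = e) : b = inv a := by
  have h2 := leftCancel b a
  rw [h, op_e_right] at h2
  rw [← h2, inv_inv]

theorem idem_eq_e {x : G} (h : op x x = x) : x = e := by
  apply L_injective x
  rw [h, op_e_right]

theorem gyr_e_fix (a b : G) : gyr a b e = e := by
  apply idem_eq_e
  rw [← gyr_op, op_e]

theorem gyr_formula (a b c : G) : gyr a b c = op (inv (op a b)) (op a (op b c)) := by
  rw [gyrassoc a b c, leftCancel]

end GyroAux

open Gyrogroup in
/-- Let `φ` be a gyrogroup homomorphism defined on a gyrogroup `G`. Then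
`ker φ = {a ∈ G : φ(a) = e}` is a strong subgyrogroup of `G`, and consequently the coset
space `G/ker φ` is a minimally invariant set of the geometry `(G, Γₘ)`. -/
theorem stmt16 {G H : Type*} [Gyrogroup G] [Gyrogroup H] (φ : G → H)
    (hφ : ∀ a b : G, φ (op a b) = op (φ a) (φ b)) :
    IsSubgyrogroup {a : G | φ a = e} ∧
      (∀ a b : G, gyr a b '' {x : G | φ x = e} = {x : G | φ x = e}) ∧
      IsMinimallyInvariantSet (Γm G)
        {X : Set G | ∃ g : G, X = op g '' {x : G | φ x = e}} := by
  open GyroAux in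
  set K : Set G := {a : G | φ a = e} with hK
  -- basic homomorphism facts
  have hφe : φ e = e := by
    apply idem_eq_e
    rw [← hφ, op_e]
  have hφinv : ∀ a : G, φ (inv a) = inv (φ a) := by
    intro a
    apply left_inv_unique
    rw [← hφ, op_inv, hφe]
  have hφgyr : ∀ a b x : G, φ (gyr a b x) = gyr (φ a) (φ b) (φ x) := by
    intro a b x
    simp only [gyr_formula, hφ, hφinv]
  -- the kernel is invariant under all gyrations
  have hgyrK : ∀ a b : G, gyr a b '' K = K := by
    intro a b
    ext y
    constructor
    · rintro ⟨x, hx, rfl⟩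
      show φ (gyr a b x) = e
      rw [hφgyr, hx, gyr_e_fix]
    · intro hy
      obtain ⟨x, hx⟩ := (gyr_bijective a b).2 y
      refine ⟨x, ?_, hx⟩
      have h1 : gyr (φ a) (φ b) (φ x) = gyr (φ a) (φ b) e := by
        rw [← hφgyr, hx, gyr_e_fix]
        exact hy
      exact (gyr_bijective (φ a) (φ b)).1 h1
  -- coset computation lemmas
  have hLcoset : ∀ a g : G, op a '' (op g '' K) = op (op a g) '' K := by
    intro a g
    rw [← Set.image_comp,
      show (op a ∘ op g) = (op (op a g)) ∘ (gyr a g) from funext fun x => gyrassoc a g x,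
      Set.image_comp, hgyrK]
  have hgyrcoset : ∀ a b g : G, gyr a b '' (op g '' K) = op (gyr a b g) '' K := by
    intro a b g
    rw [← Set.image_comp,
      show (gyr a b ∘ op g) = (op (gyr a b g)) ∘ (gyr a b) from funext fun x => gyr_op a b g x,
      Set.image_comp, hgyrK]
  -- every element of GYR G maps cosets to cosets (in both directions)
  have hGYR : ∀ γ ∈ GYR G,
      (∀ g : G, ∃ g' : G, ⇑γ '' (op g '' K) = op g' '' K) ∧
      (∀ g : G, ∃ g' : G, ⇑γ⁻¹ '' (op g '' K) = op g' '' K) := by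
    intro γ hγ
    induction hγ using Subgroup.closure_induction with
    | mem π hπ =>
      obtain ⟨a, b, rfl⟩ := hπ
      have hcoe : ⇑(gyrPerm a b) = gyr a b := rfl
      constructor
      · intro g
        exact ⟨gyr a b g, by rw [hcoe]; exact hgyrcoset a b g⟩
      · intro g
        refine ⟨(gyrPerm a b).symm g, ?_⟩
        have h2 : gyr a b ((gyrPerm a b).symm g) = g := (gyrPerm a b).apply_symm_apply g
        have h1 : op g '' K = gyr a b '' (op ((gyrPerm a b).symm g) '' K) := by
          rw [hgyrcoset, h2]
        rw [h1, show ⇑(gyrPerm a b)⁻¹ = ⇑(gyrPerm a b).symm from rfl, ← hcoe,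
          Equiv.symm_image_image]
    | one =>
      constructor <;> intro g <;> exact ⟨g, by simp⟩
    | mul x y hx hy ihx ihy =>
      constructor
      · intro g
        obtain ⟨g1, hg1⟩ := ihy.1 g
        obtain ⟨g2, hg2⟩ := ihx.1 g1
        exact ⟨g2, by rw [Equiv.Perm.coe_mul, Set.image_comp, hg1, hg2]⟩
      · intro g
        obtain ⟨g1, hg1⟩ := ihx.2 g
        obtain ⟨g2, hg2⟩ := ihy.2 g1
        refine ⟨g2, ?_⟩
        rw [show (x * y)⁻¹ = y⁻¹ * x⁻¹ from mul_inv_rev x y, Equiv.Perm.coe_mul,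
          Set.image_comp, hg1, hg2]
    | inv x hx ihx =>
      exact ⟨ihx.2, by simpa using ihx.1⟩
  have heK : (e : G) ∈ K := hφe
  have heKrep : op (e : G) '' K = K := by
    rw [show (op (e : G)) = id from funext op_e, Set.image_id]
  refine ⟨⟨⟨e, heK⟩, ?_, ?_, ?_⟩, hgyrK, ?_, ?_⟩
  · -- closed under op
    intro a ha b hb
    show φ (op a b) = e
    rw [hφ, ha, hb, op_e]
  · -- closed under inv
    intro a ha
    show φ (inv a) = e
    rw [hφinv, ha]
    exact (left_inv_unique (op_e e)).symm
  · -- gyr a b '' K = K for a b ∈ K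
    intro a _ b _
    exact hgyrK a b
  · -- invariance
    rintro X ⟨g, rfl⟩ T ⟨a, γ, hγ, rfl⟩
    obtain ⟨g', hg'⟩ := (hGYR γ hγ).1 g
    refine ⟨op a g', ?_⟩
    rw [Equiv.Perm.coe_mul, Set.image_comp, hg',
      show ⇑(Lperm a) = op a from rfl, hLcoset]
  · -- minimality
    rintro 𝒟 h𝒟sub h𝒟inv ⟨X, hX𝒟⟩
    apply Set.Subset.antisymm h𝒟sub
    rintro Y ⟨h, rfl⟩
    obtain ⟨g, rfl⟩ := h𝒟sub hX𝒟
    have hTmem : (Lperm (op h (inv g)) * gyrPerm h (inv g)) ∈ Γm G :=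
      ⟨op h (inv g), gyrPerm h (inv g), Subgroup.subset_closure ⟨h, inv g, rfl⟩, rfl⟩
    have hT := h𝒟inv _ hX𝒟 _ hTmem
    have himg : ⇑(Lperm (op h (inv g)) * gyrPerm h (inv g)) '' (op g '' K) = op h '' K := by
      rw [Equiv.Perm.coe_mul, Set.image_comp,
        show ⇑(gyrPerm h (inv g)) = gyr h (inv g) from rfl, hgyrcoset,
        show ⇑(Lperm (op h (inv g))) = op (op h (inv g)) from rfl, hLcoset,
        show op (op h (inv g)) (gyr h (inv g) g) = h from by
          rw [← gyrassoc, op_inv, op_e_right]]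
    rwa [himg] at hT
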